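/- arXiv:1203.0843 — 2 statements merged into one kernel-verified Lean document; each statement's English description precedes it below -/
import Mathlib

section
/- Let G be a connected graph with minimum degree at least three, let v be a vertex of G of degree n ≥ 4, and let G' be the graph obtained from G by splitting v into two vertices each of degree at least three. Then γ_M(G') ≤ γ_M(G). -/
/-- A finite multigraph (loops and multiple edges allowed), presented by its darts
(edge-ends): `dinv` is the fixed-point-free involution pairing the two darts of each
edge, and `dvert` sends a dart to the vertex it is attached to. -/
structure Multigraph : Type 1 where
  V : Type
  D : Type
  fintypeV : Fintype V
  fintypeD : Fintype D
  decEqV : DecidableEq V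
  decEqD : DecidableEq D
  dinv : D → D
  dinv_invol : ∀ d, dinv (dinv d) = d
  dinv_ne : ∀ d, dinv d ≠ d
  dvert : D → V

attribute [instance] Multigraph.fintypeV Multigraph.fintypeD Multigraph.decEqV Multigraph.decEqD

namespace Multigraph

variable (G : Multigraph)

/-- The number of edges `|E(G)|` (darts come in pairs). -/
def edgeCount : ℕ := Fintype.card G.D / 2

/-- The number of vertices `|V(G)|`. -/
def vertexCount : ℕ := Fintype.card G.V

/-- The Betti number (cycle rank) `β(G) = |E(G)| - |V(G)| + 1`. -/
def betti : ℕ := G.edgeCount + 1 - G.vertexCount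

/-- The degree of a vertex: the number of darts attached to it (a loop counts twice). -/
def degree (v : G.V) : ℕ := Fintype.card {d : G.D // G.dvert d = v}

/-- Two vertices are adjacent if some edge joins them. -/
def Adj (u v : G.V) : Prop := ∃ d, G.dvert d = u ∧ G.dvert (G.dinv d) = v

/-- `G` is connected. -/
def Connected : Prop := Nonempty G.V ∧ ∀ u v : G.V, Relation.ReflTransGen G.Adj u v

/-- A rotation system on `G`: a permutation of the darts whose orbits are exactly the
sets of darts attached to each vertex (a cyclic order of the edge-ends at each vertex).
Rotation systems are in 1-1 correspondence with cellular embeddings of `G` into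
orientable surfaces (and with joint-trees of `G`). -/
structure RotationSystem where
  σ : Equiv.Perm G.D
  vert_eq : ∀ d, G.dvert (σ d) = G.dvert d
  orbit : ∀ d d', G.dvert d = G.dvert d' → ∃ k : ℕ, (σ ^ k) d = d'

/-- The number of orbits of a self-map of a finite type. -/
noncomputable def orbitCount {α : Type} (f : α → α) : ℕ :=
  Nat.card (Quot fun a b => f a = b)

/-- The number of faces of the embedding determined by a rotation system: the number
of orbits of `σ ∘ dinv` (face-tracing). -/
noncomputable def faceCount (ρ : G.RotationSystem) : ℕ :=
  orbitCount fun d => ρ.σ (G.dinv d)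

/-- The genus of the orientable surface of the embedding determined by a rotation
system, via the Euler formula `|V| - |E| + |F| = 2 - 2g`. -/
noncomputable def embGenus (ρ : G.RotationSystem) : ℕ :=
  ((2 + (G.edgeCount : ℤ) - (G.vertexCount : ℤ) - (G.faceCount ρ : ℤ)) / 2).toNat

/-- The maximum genus `γ_M(G)`: the largest genus of an orientable surface admitting a
cellular embedding of `G`. -/
noncomputable def maxGenus : ℕ := sSup {k : ℕ | ∃ ρ : G.RotationSystem, G.embGenus ρ = k}

/-- `G` is upper embeddable if `γ_M(G) = ⌊β(G)/2⌋`. -/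
def UpperEmbeddable : Prop := G.maxGenus = G.betti / 2

/-- `G - v`: delete the vertex `v` together with all edges incident to it. -/
def deleteVertex (v : G.V) : Multigraph where
  V := {u : G.V // u ≠ v}
  D := {d : G.D // G.dvert d ≠ v ∧ G.dvert (G.dinv d) ≠ v}
  fintypeV := by infer_instance
  fintypeD := by infer_instance
  decEqV := by infer_instance
  decEqD := by infer_instance
  dinv := fun d => ⟨G.dinv d.1, d.2.2, by rw [G.dinv_invol]; exact d.2.1⟩
  dinv_invol := fun d => Subtype.ext (G.dinv_invol d.1)
  dinv_ne := fun d h => G.dinv_ne d.1 (congrArg Subtype.val h)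
  dvert := fun d => ⟨G.dvert d.1, d.2.1⟩

/-- The multigraph with vertex set `Fin m` and `k` edges whose endpoints are given by
`ends`. -/
def ofEdges (m k : ℕ) (ends : Fin k → Fin m × Fin m) : Multigraph where
  V := Fin m
  D := Fin k × Bool
  fintypeV := by infer_instance
  fintypeD := by infer_instance
  decEqV := by infer_instance
  decEqD := by infer_instance
  dinv := fun d => (d.1, !d.2)
  dinv_invol := fun d => by simp
  dinv_ne := fun d h => by simpa using congrArg Prod.snd h
  dvert := fun d => if d.2 then (ends d.1).1 else (ends d.1).2

end Multigraph
namespace Multigraph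

/-- Data witnessing that `G'` is obtained from `G` by splitting the vertex `v` into the
two vertices `v₁` and `v₂`: `v₁` and `v₂` are joined by a new edge (the dart `newDart`),
every other edge of `G'` corresponds to an edge of `G`, and each former edge-end at `v`
is attached to `v₁` or to `v₂`. -/
structure SplitData (G G' : Multigraph) (v : G.V) (v₁ v₂ : G'.V) where
  ne12 : v₁ ≠ v₂
  newDart : G'.D
  hdart₁ : G'.dvert newDart = v₁
  hdart₂ : G'.dvert (G'.dinv newDart) = v₂
  fD : G.D ≃ {d : G'.D // d ≠ newDart ∧ d ≠ G'.dinv newDart}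
  fV : G'.V → G.V
  hv₁ : fV v₁ = v
  hv₂ : fV v₂ = v
  fiber : ∀ w, fV w = v → w = v₁ ∨ w = v₂
  inj : ∀ w w', fV w = fV w' → fV w = v ∨ w = w'
  surj : Function.Surjective fV
  vert_compat : ∀ d : G.D, fV (G'.dvert (fD d).1) = G.dvert d
  inv_compat : ∀ d : G.D, ((fD (G.dinv d)) : G'.D) = G'.dinv ((fD d) : G'.D)

/-- `G'` is obtained from `G` by splitting the vertex `v` into two vertices. -/
def IsSplitAt (G G' : Multigraph) (v : G.V) : Prop :=
  ∃ v₁ v₂ : G'.V, Nonempty (SplitData G G' v v₁ v₂)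

/-- `G'` is obtained from `G` by a single vertex-splitting operation. -/
def SplitStep (G G' : Multigraph) : Prop := ∃ v : G.V, IsSplitAt G G' v

/-- Isomorphism of multigraphs. -/
def Iso (G H : Multigraph) : Prop :=
  ∃ (fV : G.V ≃ H.V) (fD : G.D ≃ H.D),
    (∀ d, fD (G.dinv d) = H.dinv (fD d)) ∧ ∀ d, fV (G.dvert d) = H.dvert (fD d)

/-- The Möbius ladder `M_{2n}`: the cubic graph obtained from the `2n`-cycle
`v₁ v₂ … v_{2n}` (here `0`-indexed on `Fin (2*n)`) by adding the `n` rungs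
`(v_i, v_{n+i})`, `i = 1, …, n`. -/
def mobiusLadder (n : ℕ) (hn : 0 < n) : Multigraph :=
  ofEdges (2*n) (3*n) (fun j =>
    if h : (j : ℕ) < 2*n then
      (⟨(j : ℕ), h⟩, ⟨((j : ℕ) + 1) % (2*n), Nat.mod_lt _ (by omega)⟩)
    else
      (⟨(j : ℕ) - 2*n, by have := j.isLt; omega⟩,
       ⟨(j : ℕ) - 2*n + n, by have := j.isLt; omega⟩))

/-- The neckband `N_{2n} = C_{2n} + R`: the `2n`-cycle `v₁ v₂ … v_{2n}` (here
`0`-indexed on `Fin (2*n)`) together with the chords `(v_{2i-1}, v_{2i+2})`,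
`i = 1, …, n`, indices mod `2n`. -/
def neckband (n : ℕ) (hn : 0 < n) : Multigraph :=
  ofEdges (2*n) (3*n) (fun j =>
    if h : (j : ℕ) < 2*n then
      (⟨(j : ℕ), h⟩, ⟨((j : ℕ) + 1) % (2*n), Nat.mod_lt _ (by omega)⟩)
    else
      (⟨2*((j : ℕ) - 2*n), by have := j.isLt; omega⟩,
       ⟨(2*((j : ℕ) - 2*n) + 3) % (2*n), Nat.mod_lt _ (by omega)⟩))

/-- The spiral `S_m^n`: vertices `v₁, …, v_{m+2n}` (here `0`-indexed on
`Fin (m+2*n)`), with the `m`-cycle `v₁ v₂ … v_m` as `p₀` and, for `1 ≤ i ≤ n`, the ear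
`p_i` consisting of the `3`-path `v_{m+2i-2} v_{m+2i-1} v_{m+2i}` joined to `v_i` when
`i ≤ m - 1` and to `v_{2i-m+1}` when `i > m - 1`. -/
def spiral (m n : ℕ) (hm : 3 ≤ m) : Multigraph :=
  ofEdges (m + 2*n) (m + 3*n) (fun j =>
    if h : (j : ℕ) < m then
      (⟨(j : ℕ), by omega⟩, ⟨((j : ℕ) + 1) % m, lt_of_lt_of_le (Nat.mod_lt _ (by omega)) (by omega)⟩)
    else
      if hc : ((j : ℕ) - m) % 3 = 0 then
        (⟨m + 2*(((j : ℕ) - m)/3 + 1) - 3, by have := j.isLt; omega⟩,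
         ⟨m + 2*(((j : ℕ) - m)/3 + 1) - 2, by have := j.isLt; omega⟩)
      else if hc1 : ((j : ℕ) - m) % 3 = 1 then
        (⟨m + 2*(((j : ℕ) - m)/3 + 1) - 2, by have := j.isLt; omega⟩,
         ⟨m + 2*(((j : ℕ) - m)/3 + 1) - 1, by have := j.isLt; omega⟩)
      else
        (⟨m + 2*(((j : ℕ) - m)/3 + 1) - 1, by have := j.isLt; omega⟩,
         ⟨if ((j : ℕ) - m)/3 + 1 ≤ m - 1 then ((j : ℕ) - m)/3
           else 2*(((j : ℕ) - m)/3 + 1) - m,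
          by have := j.isLt; split <;> omega⟩))

/-- A circuit in a multigraph: a cyclic sequence of darts successively attached
(head-to-tail), visiting pairwise distinct vertices and using pairwise distinct edges.
(A loop is a circuit of length `1`, a pair of parallel edges a circuit of length `2`.) -/
structure Circuit (G : Multigraph) where
  darts : List G.D
  nonempty : darts ≠ []
  chain : ∀ i : Fin darts.length,
    G.dvert (G.dinv (darts.get i)) =
      G.dvert (darts.get ⟨((i : ℕ) + 1) % darts.length, Nat.mod_lt _ (List.length_pos_iff.mpr nonempty)⟩)
  vert_nodup : (darts.map G.dvert).Nodup
  edge_nodup : ∀ i j : Fin darts.length, i ≠ j →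
    darts.get i ≠ darts.get j ∧ darts.get i ≠ G.dinv (darts.get j)

/-- Two circuits are the same if they use exactly the same edges. -/
def Circuit.Same {G : Multigraph} (C C' : G.Circuit) : Prop :=
  ∀ d, (d ∈ C.darts ∨ G.dinv d ∈ C.darts) ↔ (d ∈ C'.darts ∨ G.dinv d ∈ C'.darts)

/-- A vertex lies on a circuit. -/
def Circuit.Mem {G : Multigraph} (v : G.V) (C : G.Circuit) : Prop :=
  v ∈ C.darts.map G.dvert

/-- A multigraph is a cactus if all of its circuits are pairwise vertex-disjoint. -/
def IsCactus (G : Multigraph) : Prop :=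
  ∀ C C' : G.Circuit, (∃ v, Circuit.Mem v C ∧ Circuit.Mem v C') → C.Same C'

end Multigraph

/-! Contracting the new edge `v₁v₂` turns a rotation system `ρ'` of `G'` into one of `G`: the
rotations at `v₁` and `v₂` are spliced together where the new edge was. Both the spliced
rotation and the face-tracing permutation of `G` are first-return maps, to the old darts, of
permutations of the darts of `G'` (the rotation `ρ'` with the two new darts swapped, and the
face-tracing permutation of `ρ'`); the degree bounds guarantee that a return takes at most two
steps. First-return maps see every orbit that meets the old darts, so the spliced rotation is
transitive at the merged vertex and `G` has at most as many faces as `G'`. As `G'` has one more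
vertex and one more edge than `G`, Euler's formula then bounds the genus of `ρ'` by that of
the contracted rotation system. -/

open Function Equiv

namespace Equiv.Perm

variable {α : Type*} {f g : Perm α} {x y : α}

theorem SameCycle.of_forall_sameCycle_apply [Finite α] (h : ∀ z, g.SameCycle z (f z))
    (hxy : f.SameCycle x y) : g.SameCycle x y := by
  obtain ⟨n, rfl⟩ := hxy.exists_nat_pow_eq
  clear hxy
  induction n with
  | zero => exact .rfl
  | succ n ih => exact ih.trans (by rw [pow_succ', mul_apply]; exact h _)

theorem sameCycle_of_pow_apply_eq {s : Set α} {b : α} (hs : Set.MapsTo f s s)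
    (hfg : ∀ z ∈ s, z ≠ b → g z = f z) {k : ℕ} (hx : x ∈ s) (hk : (f ^ k) x = b) :
    g.SameCycle x b := by
  induction k generalizing x with
  | zero => exact hk ▸ .rfl
  | succ k ih =>
    by_cases hxb : x = b
    · exact hxb ▸ .rfl
    rw [pow_succ, mul_apply] at hk
    have h := ih (hs hx) hk
    rw [← hfg x hx hxb] at h
    exact sameCycle_apply_left.1 h

end Equiv.Perm

namespace Function

variable {α β : Type*} {f : α → α} {i : β → α} {g : β → β}

def IsFirstReturnMap (f : α → α) (i : β → α) (g : β → β) : Prop :=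
  ∀ b, ∃ k, f^[k + 1] (i b) = i (g b) ∧ ∀ j < k, f^[j + 1] (i b) ∉ Set.range i

namespace IsFirstReturnMap

theorem exists_iterate_eq (hg : IsFirstReturnMap f i g) (hi : Injective i) {k : ℕ} {b b' : β}
    (h : f^[k] (i b) = i b') : ∃ m, g^[m] b = b' := by
  induction k using Nat.strong_induction_on generalizing b with
  | _ k ih =>
    obtain ⟨r, hr, hmin⟩ := hg b
    rcases Nat.lt_or_ge k (r + 1) with hk | hk
    · cases k with
      | zero => exact ⟨0, hi h⟩
      | succ j => exact absurd ⟨b', h.symm⟩ (hmin j (by omega))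
    · rw [show k = k - (r + 1) + (r + 1) by omega, iterate_add_apply, hr] at h
      obtain ⟨m, hm⟩ := ih _ (by omega) h
      exact ⟨m + 1, hm⟩

theorem injective (hg : IsFirstReturnMap f i g) (hf : Injective f) (hi : Injective i) :
    Injective g := by
  intro b b' hbb'
  obtain ⟨k, hk, hmin⟩ := hg b
  obtain ⟨k', hk', hmin'⟩ := hg b'
  wlog hle : k ≤ k' generalizing b b' k k'
  · exact (this hbb'.symm k' hk' hmin' k hk hmin (by omega)).symm
  have hb : i b = f^[k' - k] (i b') := hf.iterate (k + 1) <| by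
    rw [hk, ← iterate_add_apply, show k + 1 + (k' - k) = k' + 1 by omega, hk', hbb']
  rcases Nat.eq_zero_or_pos (k' - k) with h0 | hpos
  · rw [h0, iterate_zero_apply] at hb
    exact hi hb
  · rw [show k' - k = k' - k - 1 + 1 by omega] at hb
    exact absurd ⟨b, hb⟩ (hmin' _ (by omega))

theorem apply_eq {γ : Type*} {q : α → γ} (hg : IsFirstReturnMap f i g) (hq : ∀ a, q (f a) = q a)
    (b : β) : q (i (g b)) = q (i b) := by
  obtain ⟨k, hk, -⟩ := hg b
  rw [← hk]
  induction k + 1 with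
  | zero => rfl
  | succ n ih => rw [iterate_succ_apply', hq, ih]

end IsFirstReturnMap

end Function

namespace Multigraph

theorem quot_mk_iterate {α : Type} (f : α → α) (n : ℕ) (a : α) :
    Quot.mk (fun a b => f a = b) (f^[n] a) = Quot.mk _ a := by
  induction n generalizing a with
  | zero => rfl
  | succ n ih =>
    rw [iterate_succ_apply, ih]
    exact (Quot.sound (r := fun a b => f a = b) rfl).symm

theorem sameCycle_of_quot_mk_eq {α : Type} (f : Perm α) {a b : α}
    (h : Quot.mk (fun a b => f a = b) a = Quot.mk _ b) : f.SameCycle a b := by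
  have := Quot.eqvGen_exact h
  clear h
  induction this with
  | rel x y hxy => exact hxy ▸ Perm.sameCycle_apply_right.2 .rfl
  | refl => exact .rfl
  | symm _ _ _ ih => exact ih.symm
  | trans _ _ _ _ _ ih₁ ih₂ => exact ih₁.trans ih₂

theorem orbitCount_le_of_isFirstReturnMap {α β : Type} [Finite α] {f : Perm α} {i : β → α}
    {g : β → β} (hg : IsFirstReturnMap f i g) (hi : Injective i) :
    orbitCount g ≤ orbitCount f := by
  let F : Quot (fun a b => g a = b) → Quot (fun a b => f a = b) :=
    Quot.lift (fun b => Quot.mk _ (i b)) <| by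
      rintro b _ rfl
      obtain ⟨k, hk, -⟩ := hg b
      rw [← hk, quot_mk_iterate]
  refine Nat.card_le_card_of_injective F ?_
  rintro ⟨b⟩ ⟨b'⟩ h
  obtain ⟨n, hn⟩ := (sameCycle_of_quot_mk_eq f h).exists_nat_pow_eq
  rw [← Perm.iterate_eq_pow] at hn
  obtain ⟨m, rfl⟩ := hg.exists_iterate_eq hi hn
  exact (quot_mk_iterate g m b).symm

variable {G : Multigraph}

theorem RotationSystem.sameCycle (ρ : G.RotationSystem) {d d' : G.D}
    (h : G.dvert d = G.dvert d') : ρ.σ.SameCycle d d' :=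
  let ⟨k, hk⟩ := ρ.orbit d d' h
  ⟨k, by rwa [zpow_natCast]⟩

theorem RotationSystem.apply_ne_self (ρ : G.RotationSystem) {d : G.D}
    (h : 2 ≤ G.degree (G.dvert d)) : ρ.σ d ≠ d := by
  intro hfix
  have hall : ∀ x : {x // G.dvert x = G.dvert d}, x.1 = d := fun x =>
    (ρ.sameCycle x.2).eq_of_right hfix
  have : G.degree (G.dvert d) ≤ 1 :=
    Fintype.card_le_one_iff.2 fun x y => Subtype.ext ((hall x).trans (hall y).symm)
  omega

def dinvPerm (G : Multigraph) : Perm G.D := Involutive.toPerm _ G.dinv_invol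

def RotationSystem.facePerm (ρ : G.RotationSystem) : Perm G.D := ρ.σ * G.dinvPerm

theorem embGenus_le_maxGenus (ρ : G.RotationSystem) : G.embGenus ρ ≤ G.maxGenus := by
  refine le_csSup ⟨G.edgeCount + 2, ?_⟩ ⟨ρ, rfl⟩
  rintro _ ⟨ρ, rfl⟩
  rw [embGenus, Int.toNat_le]
  omega

end Multigraph

namespace Multigraph.SplitData

variable {G G' : Multigraph} {v : G.V} {v₁ v₂ : G'.V} (S : SplitData G G' v v₁ v₂)

def embed (d : G.D) : G'.D := (S.fD d).1

theorem fV_dvert_embed (d : G.D) : S.fV (G'.dvert (S.embed d)) = G.dvert d := S.vert_compat d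

theorem embed_injective : Injective S.embed := fun _ _ h => S.fD.injective (Subtype.ext h)

theorem mem_range_embed {x : G'.D} :
    x ∈ Set.range S.embed ↔ x ≠ S.newDart ∧ x ≠ G'.dinv S.newDart :=
  ⟨by rintro ⟨d, rfl⟩; exact (S.fD d).2, fun h => ⟨S.fD.symm ⟨x, h⟩, by simp [embed]⟩⟩

theorem card_dart (S : SplitData G G' v v₁ v₂) :
    Fintype.card G'.D = Fintype.card G.D + 2 := by
  have hne : S.newDart ≠ G'.dinv S.newDart := (G'.dinv_ne _).symm
  have hfilter : Finset.univ.filter (fun d => d ≠ S.newDart ∧ d ≠ G'.dinv S.newDart) =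
      (Finset.univ.erase S.newDart).erase (G'.dinv S.newDart) := by
    ext; simp [and_comm]
  have hpair := Finset.card_le_univ ({S.newDart, G'.dinv S.newDart} : Finset G'.D)
  rw [Finset.card_pair hne] at hpair
  rw [Fintype.card_congr S.fD, Fintype.card_subtype, hfilter,
    Finset.card_erase_of_mem (by simp [hne.symm]), Finset.card_erase_of_mem (by simp),
    Finset.card_univ]
  omega

theorem bijective_fV_restrict (S : SplitData G G' v v₁ v₂) :
    Bijective fun w : {w : G'.V // w ≠ v₂} => S.fV w := by
  refine ⟨?_, fun u => ?_⟩
  · have eq_v₁ : ∀ w : {w : G'.V // w ≠ v₂}, S.fV w = v → w.1 = v₁ := fun w hw =>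
      (S.fiber w hw).resolve_right w.2
    rintro w w' (h : S.fV w = S.fV w')
    rcases S.inj w w' h with hv | he
    · exact Subtype.ext ((eq_v₁ w hv).trans (eq_v₁ w' (h ▸ hv)).symm)
    · exact Subtype.ext he
  · obtain ⟨w, rfl⟩ := S.surj u
    by_cases hw : w = v₂
    · exact ⟨⟨v₁, S.ne12⟩, by simp only [S.hv₁, hw, S.hv₂]⟩
    · exact ⟨⟨w, hw⟩, rfl⟩

theorem card_vertex (S : SplitData G G' v v₁ v₂) :
    Fintype.card G'.V = Fintype.card G.V + 1 := by
  have hcard : Fintype.card {w : G'.V // w ≠ v₂} = Fintype.card G'.V - 1 := by simp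
  have hpos : 0 < Fintype.card G'.V := Fintype.card_pos_iff.2 ⟨v₂⟩
  rw [← Fintype.card_of_bijective S.bijective_fV_restrict, hcard]
  omega

variable (ρ' : G'.RotationSystem)

def mergePerm : Perm G'.D := ρ'.σ * swap S.newDart (G'.dinv S.newDart)

theorem mergePerm_newDart : S.mergePerm ρ' S.newDart = ρ'.σ (G'.dinv S.newDart) := by
  simp [mergePerm]

theorem mergePerm_dinv_newDart : S.mergePerm ρ' (G'.dinv S.newDart) = ρ'.σ S.newDart := by
  simp [mergePerm]

theorem mergePerm_apply_of_ne {x : G'.D} (hx : x ≠ S.newDart) (hx' : x ≠ G'.dinv S.newDart) :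
    S.mergePerm ρ' x = ρ'.σ x := by
  simp [mergePerm, swap_apply_of_ne_of_ne hx hx']

theorem fV_dvert_mergePerm (x : G'.D) :
    S.fV (G'.dvert (S.mergePerm ρ' x)) = S.fV (G'.dvert x) := by
  rw [mergePerm, Perm.mul_apply, ρ'.vert_eq, swap_apply_def]
  split_ifs with h h'
  · rw [h, S.hdart₁, S.hdart₂, S.hv₁, S.hv₂]
  · rw [h', S.hdart₁, S.hdart₂, S.hv₁, S.hv₂]
  · rfl

theorem sameCycle_mergePerm_newDart :
    (S.mergePerm ρ').SameCycle S.newDart (G'.dinv S.newDart) := by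
  obtain ⟨k, hk⟩ := ρ'.orbit (ρ'.σ (G'.dinv S.newDart)) (G'.dinv S.newDart) (ρ'.vert_eq _)
  have hs : Set.MapsTo ρ'.σ {x | G'.dvert x = v₂} {x | G'.dvert x = v₂} := fun x hx =>
    (ρ'.vert_eq x).trans hx
  have hagree : ∀ x ∈ {x | G'.dvert x = v₂}, x ≠ G'.dinv S.newDart →
      S.mergePerm ρ' x = ρ'.σ x := fun x (hx : G'.dvert x = v₂) hx' =>
    S.mergePerm_apply_of_ne ρ' (fun h => S.ne12 (by rw [← S.hdart₁, ← h, hx])) hx'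
  rw [← Perm.sameCycle_apply_left, mergePerm_newDart]
  exact Perm.sameCycle_of_pow_apply_eq hs hagree ((ρ'.vert_eq _).trans S.hdart₂) hk

theorem sameCycle_mergePerm_apply (x : G'.D) : (S.mergePerm ρ').SameCycle x (ρ'.σ x) := by
  by_cases hx : x = S.newDart
  · rw [hx, ← mergePerm_dinv_newDart, Perm.sameCycle_apply_right]
    exact S.sameCycle_mergePerm_newDart ρ'
  by_cases hx' : x = G'.dinv S.newDart
  · rw [hx', ← mergePerm_newDart, Perm.sameCycle_apply_right]
    exact (S.sameCycle_mergePerm_newDart ρ').symm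
  rw [← S.mergePerm_apply_of_ne ρ' hx hx']
  exact Perm.sameCycle_apply_right.2 .rfl

theorem sameCycle_mergePerm_of_sameCycle {x y : G'.D} (h : ρ'.σ.SameCycle x y) :
    (S.mergePerm ρ').SameCycle x y :=
  h.of_forall_sameCycle_apply (S.sameCycle_mergePerm_apply ρ')

theorem sameCycle_mergePerm_newDart_of_dvert {x : G'.D}
    (hx : G'.dvert x = v₁ ∨ G'.dvert x = v₂) : (S.mergePerm ρ').SameCycle x S.newDart := by
  rcases hx with hx | hx
  · exact S.sameCycle_mergePerm_of_sameCycle ρ' (ρ'.sameCycle (hx.trans S.hdart₁.symm))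
  · exact (S.sameCycle_mergePerm_of_sameCycle ρ' (ρ'.sameCycle (hx.trans S.hdart₂.symm))).trans
      (S.sameCycle_mergePerm_newDart ρ').symm

theorem sameCycle_mergePerm_embed {d d' : G.D} (h : G.dvert d = G.dvert d') :
    (S.mergePerm ρ').SameCycle (S.embed d) (S.embed d') := by
  by_cases hv : G.dvert d = v
  · have hfiber : ∀ d, G.dvert d = v → G'.dvert (S.embed d) = v₁ ∨ G'.dvert (S.embed d) = v₂ :=
      fun d hd => S.fiber _ ((S.fV_dvert_embed d).trans hd)
    exact (S.sameCycle_mergePerm_newDart_of_dvert ρ' (hfiber d hv)).trans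
      (S.sameCycle_mergePerm_newDart_of_dvert ρ' (hfiber d' (h ▸ hv))).symm
  · have hw : G'.dvert (S.embed d) = G'.dvert (S.embed d') :=
      (S.inj _ _ (by rw [fV_dvert_embed, fV_dvert_embed, h])).resolve_left
        (by rwa [fV_dvert_embed])
    exact S.sameCycle_mergePerm_of_sameCycle ρ' (ρ'.sameCycle hw)

def contractSucc (y : G'.D) : G'.D :=
  if ρ'.σ y = S.newDart then ρ'.σ (G'.dinv S.newDart)
  else if ρ'.σ y = G'.dinv S.newDart then ρ'.σ S.newDart
  else ρ'.σ y

theorem contractSucc_mem_range (h₁ : 2 ≤ G'.degree v₁) (h₂ : 2 ≤ G'.degree v₂) (y : G'.D) :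
    S.contractSucc ρ' y ∈ Set.range S.embed := by
  have hσ₁ : G'.dvert (ρ'.σ S.newDart) = v₁ := (ρ'.vert_eq _).trans S.hdart₁
  have hσ₂ : G'.dvert (ρ'.σ (G'.dinv S.newDart)) = v₂ := (ρ'.vert_eq _).trans S.hdart₂
  rw [mem_range_embed, contractSucc]
  split_ifs with h h'
  · refine ⟨fun he => S.ne12 ?_, ρ'.apply_ne_self (by rwa [S.hdart₂])⟩
    rw [← hσ₂, he, S.hdart₁]
  · refine ⟨ρ'.apply_ne_self (by rwa [S.hdart₁]), fun he => S.ne12 ?_⟩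
    rw [← hσ₁, he, S.hdart₂]
  · exact ⟨h, h'⟩

theorem isFirstReturnMap_of_contractSucc {f : G'.D → G'.D} {g : G.D → G.D}
    (hf : f S.newDart = ρ'.σ (G'.dinv S.newDart)) (hf' : f (G'.dinv S.newDart) = ρ'.σ S.newDart)
    (hg : ∀ d, ∃ y, f (S.embed d) = ρ'.σ y ∧ S.embed (g d) = S.contractSucc ρ' y) :
    IsFirstReturnMap f S.embed g := by
  intro d
  obtain ⟨y, hy, hgd⟩ := hg d
  rw [hgd, contractSucc]
  split_ifs with h h'
  · refine ⟨1, by rw [iterate_succ_apply', iterate_one, hy, h, hf], ?_⟩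
    intro j hj
    rw [Nat.lt_one_iff.1 hj, iterate_one, hy, h, mem_range_embed]
    exact fun hne => hne.1 rfl
  · refine ⟨1, by rw [iterate_succ_apply', iterate_one, hy, h', hf'], ?_⟩
    intro j hj
    rw [Nat.lt_one_iff.1 hj, iterate_one, hy, h', mem_range_embed]
    exact fun hne => hne.2 rfl
  · exact ⟨0, by rw [iterate_one, hy], fun j hj => absurd hj (Nat.not_lt_zero j)⟩

variable (h₁ : 2 ≤ G'.degree v₁) (h₂ : 2 ≤ G'.degree v₂)

def contractFun (d : G.D) : G.D :=
  S.fD.symm ⟨S.contractSucc ρ' (S.embed d),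
    S.mem_range_embed.1 (S.contractSucc_mem_range ρ' h₁ h₂ _)⟩

theorem embed_contractFun (d : G.D) :
    S.embed (S.contractFun ρ' h₁ h₂ d) = S.contractSucc ρ' (S.embed d) := by
  simp [embed, contractFun]

theorem isFirstReturnMap_contractFun :
    IsFirstReturnMap (S.mergePerm ρ') S.embed (S.contractFun ρ' h₁ h₂) :=
  S.isFirstReturnMap_of_contractSucc ρ' (S.mergePerm_newDart ρ') (S.mergePerm_dinv_newDart ρ')
    fun d => ⟨S.embed d, S.mergePerm_apply_of_ne ρ' (S.fD d).2.1 (S.fD d).2.2,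
      S.embed_contractFun ρ' h₁ h₂ d⟩

noncomputable def contractRotation : G.RotationSystem where
  σ := Equiv.ofBijective (S.contractFun ρ' h₁ h₂) <| Finite.injective_iff_bijective.1 <|
    (S.isFirstReturnMap_contractFun ρ' h₁ h₂).injective (Equiv.injective _) S.embed_injective
  vert_eq d := by
    rw [← S.fV_dvert_embed, ← S.fV_dvert_embed d]
    exact (S.isFirstReturnMap_contractFun ρ' h₁ h₂).apply_eq (q := S.fV ∘ G'.dvert)
      (S.fV_dvert_mergePerm ρ') d
  orbit d d' h := by
    obtain ⟨n, hn⟩ := (S.sameCycle_mergePerm_embed ρ' h).exists_nat_pow_eq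
    rw [← Perm.iterate_eq_pow] at hn
    obtain ⟨m, hm⟩ :=
      (S.isFirstReturnMap_contractFun ρ' h₁ h₂).exists_iterate_eq S.embed_injective hn
    exact ⟨m, by rw [← Perm.iterate_eq_pow]; exact hm⟩

theorem isFirstReturnMap_facePerm :
    IsFirstReturnMap ρ'.facePerm S.embed (S.contractRotation ρ' h₁ h₂).facePerm := by
  refine S.isFirstReturnMap_of_contractSucc ρ' rfl (congrArg ρ'.σ (G'.dinv_invol _)) fun d =>
    ⟨G'.dinv (S.embed d), rfl, ?_⟩
  exact (S.embed_contractFun ρ' h₁ h₂ (G.dinv d)).trans (congrArg _ (S.inv_compat d))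

theorem faceCount_contractRotation_le :
    G.faceCount (S.contractRotation ρ' h₁ h₂) ≤ G'.faceCount ρ' :=
  orbitCount_le_of_isFirstReturnMap (S.isFirstReturnMap_facePerm ρ' h₁ h₂) S.embed_injective

theorem embGenus_le_embGenus_contractRotation :
    G'.embGenus ρ' ≤ G.embGenus (S.contractRotation ρ' h₁ h₂) := by
  have hE : G'.edgeCount = G.edgeCount + 1 := by
    rw [edgeCount, edgeCount, S.card_dart]
    omega
  have hV : G'.vertexCount = G.vertexCount + 1 := S.card_vertex
  have hF := S.faceCount_contractRotation_le ρ' h₁ h₂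
  rw [embGenus, embGenus, hE, hV]
  refine Int.toNat_le_toNat (Int.ediv_le_ediv (by norm_num) ?_)
  push_cast
  omega

end Multigraph.SplitData

theorem maxGenus_split_le_general (G G' : Multigraph) (v : G.V)
    (v₁ v₂ : G'.V) (hsplit : Nonempty (Multigraph.SplitData G G' v v₁ v₂))
    (h₁ : 3 ≤ G'.degree v₁) (h₂ : 3 ≤ G'.degree v₂) :
    G'.maxGenus ≤ G.maxGenus := by
  obtain ⟨S⟩ := hsplit
  refine csSup_le' ?_
  rintro _ ⟨ρ', rfl⟩
  exact (S.embGenus_le_embGenus_contractRotation ρ' (by omega) (by omega)).trans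
    (G.embGenus_le_maxGenus _)

/-- Splitting a vertex `v` of degree `n ≥ 4` of a connected graph `G` with minimum
degree at least three into two vertices each of degree at least three does not increase
the maximum genus: `γ_M(G') ≤ γ_M(G)`. -/
theorem maxGenus_split_le (G G' : Multigraph) (hG : G.Connected)
    (hmin : ∀ u : G.V, 3 ≤ G.degree u)
    (v : G.V) (n : ℕ) (hdeg : G.degree v = n) (hn : 4 ≤ n)
    (v₁ v₂ : G'.V) (hsplit : Nonempty (Multigraph.SplitData G G' v v₁ v₂))
    (h₁ : 3 ≤ G'.degree v₁) (h₂ : 3 ≤ G'.degree v₂) :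
    G'.maxGenus ≤ G.maxGenus :=
  maxGenus_split_le_general G G' v v₁ v₂ hsplit h₁ h₂
end

section
/- Let G be a connected graph and let v be an α-vertex of G, i.e., a vertex incident with a loop and with exactly one other (non-loop) edge. Then γ_M(G − v) = γ_M(G). -/
/-! Let `w` be the other end of the non-loop edge at `v`. If `w` carries further darts, the
rotation systems of `G` are exactly those of `G - v` with the link dart inserted somewhere in
the rotation at `w`, together with a `3`-cycle at `v`. Face tracing shows that `G` then has
exactly one face more than `G - v`: the loop bounds a face of its own, while the two sides of the
link edge are spliced into the face of `G - v` through the corner where the link dart was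
inserted. One more vertex, two more edges and one more face leave the Euler characteristic
unchanged, so `G` and `G - v` realise the same genera. If `w` has degree one, connectivity makes
`G` a loop with a pendant edge, and both maximum genera vanish. -/

namespace Multigraph

section OrbitCount

variable {α β : Type}

def orbitMk (f : α → α) (a : α) : Quot fun a b => f a = b := Quot.mk _ a

@[simp]
lemma orbitMk_apply (f : α → α) (a : α) : orbitMk f (f a) = orbitMk f a :=
  (Quot.sound (r := fun a b => f a = b) rfl).symm

lemma orbitCount_eq_of_retract (f : α → α) (g : β → β) (i : β → α) (r : α → β)
    (hi : ∀ b, orbitMk f (i (g b)) = orbitMk f (i b))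
    (hr : ∀ a, orbitMk g (r (f a)) = orbitMk g (r a))
    (hir : ∀ a, orbitMk f (i (r a)) = orbitMk f a)
    (hri : ∀ b, orbitMk g (r (i b)) = orbitMk g b) :
    orbitCount f = orbitCount g :=
  Nat.card_congr
    { toFun := Quot.lift (orbitMk g ∘ r) fun a _ h => h ▸ (hr a).symm
      invFun := Quot.lift (orbitMk f ∘ i) fun b _ h => h ▸ (hi b).symm
      left_inv := Quot.ind hir
      right_inv := Quot.ind hri }

lemma orbitCount_option_map [Finite β] (g : β → β) :
    orbitCount (Option.map g) = orbitCount g + 1 := by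
  refine (Nat.card_congr ?_).trans Finite.card_option
  exact
    { toFun := Quot.lift (Option.map (orbitMk g)) fun a _ h => by
        subst h; cases a <;> simp
      invFun := fun o => o.elim (orbitMk _ none)
        (Quot.lift (fun b => orbitMk _ (some b)) fun b _ h =>
          h ▸ (orbitMk_apply (Option.map g) (some b)).symm)
      left_inv := Quot.ind fun a => by cases a <;> rfl
      right_inv := fun o => by
        cases o with
        | none => rfl
        | some q => induction q using Quot.ind; rfl }

/-- `g` is `f` with the fixed point `p` dropped and the segment `t, f t, f (f t)` spliced out. -/
lemma orbitCount_eq_add_one_of_cut [Finite α] [DecidableEq α] {f : α → α} (hf : f.Injective)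
    {P : α → Prop} (g : Subtype P → Subtype P) {p t : α} (hp : f p = p)
    (hP : ∀ x, ¬ P x ↔ x = p ∨ x = t ∨ x = f t ∨ x = f (f t)) (hPt : P (f (f (f t))))
    (hg : ∀ x, (g x : α) = if f x = t then f (f (f t)) else f x) :
    orbitCount f = orbitCount g + 1 := by
  classical
  have hPp : ¬ P p := (hP p).2 (by simp)
  have hPt₀ : ¬ P t := (hP t).2 (by simp)
  have hPt₁ : ¬ P (f t) := (hP _).2 (by simp)
  have hPt₂ : ¬ P (f (f t)) := (hP _).2 (by simp)
  have hp_ne : ∀ {x}, f x = p → x = p := fun h => hf (h.trans hp.symm)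
  have hpt₃ : f (f (f t)) ≠ p := fun h => hPp (h ▸ hPt)
  have hpt₂ : f (f t) ≠ p := fun h => hpt₃ (by rw [h, hp])
  have hpt₁ : f t ≠ p := fun h => hpt₂ (by rw [h, hp])
  have hpt₀ : t ≠ p := fun h => hpt₁ (by rw [h, hp])
  have hft : ∀ x, P x → ¬ P (f x) → f x = t := by
    intro x hx hfx
    rcases (hP _).1 hfx with h | h | h | h
    · exact absurd (hp_ne h ▸ hx) hPp
    · exact h
    · exact absurd (hf h ▸ hx) hPt₀
    · exact absurd (hf h ▸ hx) hPt₁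
  let r : α → Option (Subtype P) := fun a =>
    if h : P a then some ⟨a, h⟩ else if a = p then none else some ⟨_, hPt⟩
  refine (orbitCount_eq_of_retract f (Option.map g) (fun o => o.elim p Subtype.val) r
    ?_ ?_ ?_ ?_).trans (orbitCount_option_map g)
  · rintro (_ | x)
    · rfl
    · show orbitMk f (g x) = orbitMk f x
      rw [hg]
      split_ifs with h
      · rw [← h]; simp
      · simp
  · intro a
    by_cases ha : P a
    · by_cases hfa : P (f a)
      · have : g ⟨a, ha⟩ = ⟨f a, hfa⟩ :=
          Subtype.ext ((hg _).trans (if_neg fun (h : f a = t) => hPt₀ (h ▸ hfa)))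
        simp only [r, dif_pos ha, dif_pos hfa, ← this]
        exact orbitMk_apply _ (some _)
      · have h := hft a ha hfa
        have : g ⟨a, ha⟩ = ⟨_, hPt⟩ := Subtype.ext ((hg _).trans (if_pos h))
        simp only [r, dif_pos ha, h, dif_neg hPt₀, if_neg hpt₀, ← this]
        exact orbitMk_apply _ (some _)
    · rcases (hP a).1 ha with rfl | rfl | rfl | rfl <;>
        simp [r, hp, hPp, hPt₀, hPt₁, hPt₂, hPt, hpt₀, hpt₁, hpt₂]
  · intro a
    by_cases ha : P a
    · simp [r, ha]
    · rcases (hP a).1 ha with rfl | rfl | rfl | rfl <;>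
        simp [r, hPp, hPt₀, hPt₁, hPt₂, hpt₀, hpt₁, hpt₂]
  · rintro (_ | x)
    · simp [r, hPp]
    · simp [r, x.2]

end OrbitCount

end Multigraph

namespace Equiv.Perm

variable {α : Type*} {p : α → Prop}

/-- `τ` is `σ` on `p`, with the point `t` spliced out of its cycle. -/
def IsSkip [DecidableEq α] (σ : Perm α) (t : α) (τ : Perm (Subtype p)) : Prop :=
  ∀ x, (τ x : α) = if σ x = t then σ t else σ x

namespace IsSkip

variable [DecidableEq α] {σ : Perm α} {t : α} {τ : Perm (Subtype p)}

lemma sameCycle_apply (h : σ.IsSkip t τ) (x : Subtype p) : σ.SameCycle x (τ x) := by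
  rw [h x]
  split_ifs with hx
  · rw [← hx]
    exact sameCycle_apply_right.2 (sameCycle_apply_right.2 SameCycle.rfl)
  · exact sameCycle_apply_right.2 SameCycle.rfl

lemma sameCycle_val (h : σ.IsSkip t τ) {x y : Subtype p} (hxy : τ.SameCycle x y) :
    σ.SameCycle x y := by
  obtain ⟨i, rfl⟩ := hxy
  induction i using Int.induction_on with
  | zero => exact SameCycle.rfl
  | succ i ih =>
    rw [add_comm, zpow_one_add, mul_apply]
    exact ih.trans (h.sameCycle_apply _)
  | pred i ih =>
    have hz := h.sameCycle_apply ((τ ^ (-(i : ℤ) - 1)) x)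
    rw [← mul_apply, ← zpow_one_add, add_sub_cancel] at hz
    exact ih.trans hz.symm

lemma sameCycle_of_val [Finite α] (h : σ.IsSkip t τ) (ht : ¬ p t) {x y : Subtype p}
    (hxy : σ.SameCycle x y) : τ.SameCycle x y := by
  have key : ∀ n : ℕ, (∃ z : Subtype p, (σ ^ n) x = z ∧ τ.SameCycle x z) ∨
      ((σ ^ n) x = t ∧ ∃ z : Subtype p, σ t = z ∧ τ.SameCycle x z) := by
    intro n
    induction n with
    | zero => exact Or.inl ⟨x, rfl, SameCycle.rfl⟩
    | succ n ih =>
      rw [pow_succ', mul_apply]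
      rcases ih with ⟨z, hz, hxz⟩ | ⟨hn, z, hz, hxz⟩
      · rw [hz]
        by_cases hσz : σ z = t
        · exact Or.inr ⟨hσz, τ z, by rw [h z, if_pos hσz], sameCycle_apply_right.2 hxz⟩
        · exact Or.inl ⟨τ z, by rw [h z, if_neg hσz], sameCycle_apply_right.2 hxz⟩
      · exact Or.inl ⟨z, by rw [hn, hz], hxz⟩
  obtain ⟨n, hn⟩ := hxy.exists_nat_pow_eq
  rcases key n with ⟨z, hz, hxz⟩ | ⟨hnt, -⟩
  · rwa [Subtype.ext (hn.symm.trans hz)]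
  · exact absurd (hn.symm.trans hnt ▸ y.2) ht

lemma apply_eq_of_apply_eq {β : Type*} (h : σ.IsSkip t τ) {f : α → β}
    (hf : ∀ x, f (σ x) = f x) (x : Subtype p) : f (τ x) = f x := by
  rw [h x]
  split_ifs with hx
  · rw [hf, ← hx, hf]
  · exact hf x

end IsSkip

lemma exists_isSkip [DecidableEq α] [Finite α] (σ : Perm α) {t : α} (ht : ¬ p t)
    (hp : ∀ x, p x → p (if σ x = t then σ t else σ x)) :
    ∃ τ : Perm (Subtype p), σ.IsSkip t τ := by
  let g : Subtype p → Subtype p := fun x => ⟨_, hp x x.2⟩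
  have hg : g.Injective := by
    intro x y hxy
    have hxy := congrArg Subtype.val hxy
    simp only [g] at hxy
    split_ifs at hxy with hx hy hy
    · exact Subtype.ext (σ.injective (hx.trans hy.symm))
    · exact absurd (σ.injective hxy ▸ y.2) ht
    · exact absurd (σ.injective hxy.symm ▸ x.2) ht
    · exact Subtype.ext (σ.injective hxy)
  exact ⟨Equiv.ofBijective g (Finite.injective_iff_bijective.1 hg), fun _ => rfl⟩

lemma isSkip_ofSubtype_mul_swap_mul [DecidableEq α] [DecidablePred p] (τ : Perm (Subtype p))
    {a t : α} (ha : p a) (ht : ¬ p t) {π : Perm α} (hπ : ∀ x, p x ∨ x = t → π x = x) :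
    (ofSubtype τ * swap a t * π).IsSkip t τ := by
  rintro ⟨x, hx⟩
  have hxt : x ≠ t := fun h => ht (h ▸ hx)
  simp only [mul_apply, hπ x (Or.inl hx), hπ t (Or.inr rfl)]
  by_cases hxa : x = a
  · subst hxa
    rw [swap_apply_left, ofSubtype_apply_of_not_mem τ ht, if_pos rfl, swap_apply_right,
      ofSubtype_apply_of_mem τ hx]
  · rw [swap_apply_of_ne_of_ne hxa hxt, ofSubtype_apply_of_mem τ hx, if_neg]
    exact fun h => ht (h ▸ (τ ⟨x, hx⟩).2)

end Equiv.Perm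

namespace Multigraph

variable {G : Multigraph}

lemma Connected.mem_of_closed (hG : G.Connected) {S : Set G.V} {v : G.V} (hv : v ∈ S)
    (hS : ∀ d, G.dvert d ∈ S → G.dvert (G.dinv d) ∈ S) (u : G.V) : u ∈ S := by
  induction hG.2 v u with
  | refl => exact hv
  | tail _ hadj ih =>
    obtain ⟨d, rfl, rfl⟩ := hadj
    exact hS d ih

lemma dvert_swap_apply {a b : G.D} (h : G.dvert a = G.dvert b) (x : G.D) :
    G.dvert (Equiv.swap a b x) = G.dvert x := by
  rw [Equiv.swap_apply_def]
  split_ifs with hxa hxb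
  · rw [hxa, h]
  · rw [hxb, h]
  · rfl

lemma card_V_eq_deleteVertex_add_one (v : G.V) :
    Fintype.card G.V = Fintype.card (G.deleteVertex v).V + 1 :=
  (Fintype.card_congr (Equiv.optionSubtypeNe v)).symm.trans Fintype.card_option

namespace RotationSystem

lemma sameCycle_s6 (ρ : G.RotationSystem) {d d' : G.D} (h : G.dvert d = G.dvert d') :
    ρ.σ.SameCycle d d' :=
  let ⟨k, hk⟩ := ρ.orbit d d' h
  ⟨k, by simpa using hk⟩

lemma eq_or_eq_of_apply_apply_eq_self (ρ : G.RotationSystem) {d d' : G.D}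
    (hd : ρ.σ (ρ.σ d) = d) (h : G.dvert d = G.dvert d') : d' = d ∨ d' = ρ.σ d := by
  obtain ⟨i, rfl⟩ := ρ.sameCycle_s6 h
  exact Equiv.Perm.zpow_apply_eq_of_apply_apply_eq_self hd i

lemma apply_eq_and_apply_eq_of_three (ρ : G.RotationSystem) {x y z : G.D} (hxy : x ≠ y)
    (hxz : x ≠ z) (hyz : y ≠ z) (hy : G.dvert y = G.dvert x) (hz : G.dvert z = G.dvert x)
    (hall : ∀ d, G.dvert d = G.dvert x → d = x ∨ d = y ∨ d = z) (h : ρ.σ x = y) :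
    ρ.σ y = z ∧ ρ.σ z = x := by
  have hσ : ∀ d, G.dvert d = G.dvert x → ρ.σ d = x ∨ ρ.σ d = y ∨ ρ.σ d = z :=
    fun d hd => hall _ ((ρ.vert_eq d).trans hd)
  have hσy : ρ.σ y = z := by
    rcases hσ y hy with h' | h' | h'
    · rcases ρ.eq_or_eq_of_apply_apply_eq_self (by rw [h, h']) hz.symm with h'' | h''
      · exact absurd h''.symm hxz
      · exact absurd (h''.trans h) hyz.symm
    · rcases ρ.eq_or_eq_of_apply_apply_eq_self (by rw [h', h']) hy with h'' | h''
      · exact absurd h'' hxy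
      · exact absurd (h''.trans h') hxy
    · exact h'
  refine ⟨hσy, ?_⟩
  rcases hσ z hz with h' | h' | h'
  · exact h'
  · exact absurd (ρ.σ.injective (h'.trans h.symm)) hxz.symm
  · exact absurd (ρ.σ.injective (h'.trans hσy.symm)) hyz.symm

lemma dvert_ofSubtype_apply {v : G.V} (ρ' : (G.deleteVertex v).RotationSystem)
    (x : G.D) : G.dvert (Equiv.Perm.ofSubtype ρ'.σ x) = G.dvert x := by
  by_cases hx : G.dvert x ≠ v ∧ G.dvert (G.dinv x) ≠ v
  · exact (congrArg G.dvert (Equiv.Perm.ofSubtype_apply_of_mem ρ'.σ hx)).trans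
      (congrArg Subtype.val (ρ'.vert_eq ⟨x, hx⟩))
  · exact congrArg G.dvert (Equiv.Perm.ofSubtype_apply_of_not_mem ρ'.σ hx)

end RotationSystem

lemma embGenus_eq_of_card_eq {H : Multigraph} (ρ : G.RotationSystem) (ρ' : H.RotationSystem)
    (hD : Fintype.card G.D = Fintype.card H.D + 4) (hV : Fintype.card G.V = Fintype.card H.V + 1)
    (hF : G.faceCount ρ = H.faceCount ρ' + 1) : G.embGenus ρ = H.embGenus ρ' := by
  unfold embGenus edgeCount vertexCount
  rw [hD, hV, hF]
  congr 2
  omega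

lemma embGenus_eq_zero_of_le (ρ : G.RotationSystem)
    (h : G.edgeCount + 1 ≤ G.vertexCount + G.faceCount ρ) : G.embGenus ρ = 0 := by
  unfold embGenus
  omega

lemma maxGenus_eq_zero (h : ∀ ρ : G.RotationSystem, G.embGenus ρ = 0) : G.maxGenus = 0 :=
  Nat.eq_zero_of_le_zero (csSup_le' fun _ ⟨ρ, hρ⟩ => hρ ▸ (h ρ).le)

lemma faceCount_pos [h : Nonempty G.D] (ρ : G.RotationSystem) : 0 < G.faceCount ρ :=
  have := h.map (orbitMk fun d => ρ.σ (G.dinv d))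
  Nat.card_pos

structure IsAlphaVertex (G : Multigraph) (v : G.V) (l e : G.D) : Prop where
  dvert_loop : G.dvert l = v
  dvert_dinv_loop : G.dvert (G.dinv l) = v
  dvert_link : G.dvert e = v
  dvert_dinv_link : G.dvert (G.dinv e) ≠ v
  eq_of_dvert : ∀ d, G.dvert d = v → d = l ∨ d = G.dinv l ∨ d = e

namespace IsAlphaVertex

variable {v : G.V} {l e : G.D}

lemma loop_ne_link (hα : G.IsAlphaVertex v l e) : l ≠ e :=
  fun h => hα.dvert_dinv_link (h ▸ hα.dvert_dinv_loop)

lemma dinv_loop_ne_link (hα : G.IsAlphaVertex v l e) : G.dinv l ≠ e :=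
  fun h => hα.dvert_dinv_link (by rw [← h, G.dinv_invol]; exact hα.dvert_loop)

lemma ne_dinv_link (hα : G.IsAlphaVertex v l e) {x : G.D} (hx : G.dvert x = v) :
    x ≠ G.dinv e :=
  fun h => hα.dvert_dinv_link (h ▸ hx)

lemma dvert_dinv_ne (hα : G.IsAlphaVertex v l e) {x : G.D} (hx : G.dvert x ≠ v)
    (hxe : x ≠ G.dinv e) : G.dvert (G.dinv x) ≠ v := by
  intro h
  rcases hα.eq_of_dvert _ h with h' | h' | h'
  · exact hx (by rw [← G.dinv_invol x, h']; exact hα.dvert_dinv_loop)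
  · exact hx (by rw [← G.dinv_invol x, h', G.dinv_invol]; exact hα.dvert_loop)
  · exact hxe (by rw [← h', G.dinv_invol])

lemma not_mem_deleteVertex_iff (hα : G.IsAlphaVertex v l e) (x : G.D) :
    ¬(G.dvert x ≠ v ∧ G.dvert (G.dinv x) ≠ v) ↔
      x = l ∨ x = G.dinv l ∨ x = e ∨ x = G.dinv e := by
  constructor
  · intro h
    by_cases hx : G.dvert x = v
    · rcases hα.eq_of_dvert x hx with h | h | h <;> simp [h]
    · by_contra h'
      simp only [not_or] at h'
      exact h ⟨hx, hα.dvert_dinv_ne hx h'.2.2.2⟩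
  · rintro (rfl | rfl | rfl | rfl) hx
    · exact hx.1 hα.dvert_loop
    · exact hx.1 hα.dvert_dinv_loop
    · exact hx.1 hα.dvert_link
    · exact hx.2 (by rw [G.dinv_invol]; exact hα.dvert_link)

lemma card_D_eq_deleteVertex_add_four (hα : G.IsAlphaVertex v l e) :
    Fintype.card G.D = Fintype.card (G.deleteVertex v).D + 4 := by
  have hcompl : Fintype.card {x // ¬(G.dvert x ≠ v ∧ G.dvert (G.dinv x) ≠ v)} = 4 := by
    rw [Fintype.card_subtype]
    refine Finset.card_eq_four.2 ⟨l, G.dinv l, e, G.dinv e, (G.dinv_ne l).symm,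
      hα.loop_ne_link, hα.ne_dinv_link hα.dvert_loop, hα.dinv_loop_ne_link,
      hα.ne_dinv_link hα.dvert_dinv_loop, hα.ne_dinv_link hα.dvert_link, ?_⟩
    ext x
    simp only [Finset.mem_filter, Finset.mem_univ, true_and, Finset.mem_insert,
      Finset.mem_singleton]
    exact hα.not_mem_deleteVertex_iff x
  have := Fintype.card_subtype_compl fun x => G.dvert x ≠ v ∧ G.dvert (G.dinv x) ≠ v
  have := Fintype.card_subtype_le fun x => G.dvert x ≠ v ∧ G.dvert (G.dinv x) ≠ v
  change _ = Fintype.card {x // G.dvert x ≠ v ∧ G.dvert (G.dinv x) ≠ v} + 4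
  omega

lemma exists_rotation_cycle (hα : G.IsAlphaVertex v l e) (ρ : G.RotationSystem) :
    ∃ c, (c = l ∨ c = G.dinv l) ∧
      ρ.σ e = c ∧ ρ.σ c = G.dinv c ∧ ρ.σ (G.dinv c) = e := by
  have hl : G.dvert l = G.dvert e := hα.dvert_loop.trans hα.dvert_link.symm
  have hl' : G.dvert (G.dinv l) = G.dvert e := hα.dvert_dinv_loop.trans hα.dvert_link.symm
  have hall : ∀ d, G.dvert d = G.dvert e → d = e ∨ d = l ∨ d = G.dinv l := fun d hd => by
    rcases hα.eq_of_dvert d (hd.trans hα.dvert_link) with h | h | h <;> simp [h]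
  rcases hall (ρ.σ e) (ρ.vert_eq e) with h | h | h
  · rcases ρ.eq_or_eq_of_apply_apply_eq_self (by rw [h, h]) hl.symm with h' | h'
    exacts [(hα.loop_ne_link h').elim, (hα.loop_ne_link (h'.trans h)).elim]
  · exact ⟨l, Or.inl rfl, h, ρ.apply_eq_and_apply_eq_of_three hα.loop_ne_link.symm
      hα.dinv_loop_ne_link.symm (G.dinv_ne l).symm hl hl' hall h⟩
  · obtain ⟨h₁, h₂⟩ := ρ.apply_eq_and_apply_eq_of_three hα.dinv_loop_ne_link.symm
      hα.loop_ne_link.symm (G.dinv_ne l) hl' hl (fun d hd => by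
        rcases hall d hd with h | h | h <;> simp [h]) h
    exact ⟨G.dinv l, Or.inr rfl, h, by rwa [G.dinv_invol], by rwa [G.dinv_invol]⟩

lemma faceCount_eq_deleteVertex_add_one (hα : G.IsAlphaVertex v l e) {ρ : G.RotationSystem}
    {ρ' : (G.deleteVertex v).RotationSystem} (hskip : ρ.σ.IsSkip (G.dinv e) ρ'.σ)
    (hfix : ρ.σ (G.dinv e) ≠ G.dinv e) :
    G.faceCount ρ = (G.deleteVertex v).faceCount ρ' + 1 := by
  obtain ⟨c, hc, hσe, hσc, hσc'⟩ := hα.exists_rotation_cycle ρ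
  -- `dinv c` alone bounds the loop face; `dinv e, c, e` is the segment spliced out.
  refine orbitCount_eq_add_one_of_cut
    (fun x y h => Function.Involutive.injective G.dinv_invol (ρ.σ.injective h))
    _ (p := G.dinv c) (t := G.dinv e) (by rw [G.dinv_invol, hσc]) (fun x => ?_) ?_ (fun x => ?_)
  · simp only [G.dinv_invol, hσe, hσc']
    rw [hα.not_mem_deleteVertex_iff x]
    rcases hc with rfl | rfl <;> (try simp only [G.dinv_invol]) <;> tauto
  · simp only [G.dinv_invol, hσe, hσc']
    have hw : G.dvert (ρ.σ (G.dinv e)) ≠ v := (ρ.vert_eq _).trans_ne hα.dvert_dinv_link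
    exact ⟨hw, hα.dvert_dinv_ne hw hfix⟩
  · simp only [G.dinv_invol, hσe, hσc']
    exact hskip _

lemma exists_rotationSystem_deleteVertex_isSkip (hα : G.IsAlphaVertex v l e)
    (ρ : G.RotationSystem) (hfix : ρ.σ (G.dinv e) ≠ G.dinv e) :
    ∃ ρ' : (G.deleteVertex v).RotationSystem, ρ.σ.IsSkip (G.dinv e) ρ'.σ := by
  have ht : ¬(G.dvert (G.dinv e) ≠ v ∧ G.dvert (G.dinv (G.dinv e)) ≠ v) :=
    (hα.not_mem_deleteVertex_iff _).2 (by simp)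
  obtain ⟨τ, hτ⟩ :=
    ρ.σ.exists_isSkip (p := fun d => G.dvert d ≠ v ∧ G.dvert (G.dinv d) ≠ v)
      ht fun x hx => by
    have hxv : G.dvert (if ρ.σ x = G.dinv e then ρ.σ (G.dinv e) else ρ.σ x) ≠ v := by
      split_ifs with h
      · rw [ρ.vert_eq, ← h, ρ.vert_eq]; exact hx.1
      · rw [ρ.vert_eq]; exact hx.1
    refine ⟨hxv, hα.dvert_dinv_ne hxv ?_⟩
    split_ifs with h
    exacts [hfix, h]
  exact ⟨⟨τ, fun x => Subtype.ext (hτ.apply_eq_of_apply_eq ρ.vert_eq x),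
    fun x y h =>
      (hτ.sameCycle_of_val ht (ρ.sameCycle_s6 (congrArg Subtype.val h))).exists_nat_pow_eq⟩,
    hτ⟩

open Equiv Equiv.Perm in
lemma sameCycle_of_isSkip (hα : G.IsAlphaVertex v l e) {a : G.D}
    (ha : G.dvert a = G.dvert (G.dinv e)) (hae : a ≠ G.dinv e)
    (ρ' : (G.deleteVertex v).RotationSystem) {σ : Perm G.D} (hskip : σ.IsSkip (G.dinv e) ρ'.σ)
    (hσa : σ a = G.dinv e) (hσl : σ l = G.dinv l) (hσl' : σ (G.dinv l) = e) {d d' : G.D}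
    (h : G.dvert d = G.dvert d') : σ.SameCycle d d' := by
  by_cases hd : G.dvert d = v
  · have hl : ∀ x, G.dvert x = v → σ.SameCycle l x := by
      intro x hx
      have hll' : σ.SameCycle l (G.dinv l) := hσl ▸ sameCycle_apply_right.2 SameCycle.rfl
      rcases hα.eq_of_dvert x hx with rfl | rfl | rfl
      · exact SameCycle.rfl
      · exact hll'
      · exact hσl' ▸ sameCycle_apply_right.2 hll'
    exact (hl d hd).symm.trans (hl d' (h ▸ hd))
  · have hrep : ∀ x, G.dvert x ≠ v →
        ∃ y : (G.deleteVertex v).D, G.dvert y.1 = G.dvert x ∧ σ.SameCycle x y.1 := by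
      intro x hx
      by_cases hxe : x = G.dinv e
      · subst hxe
        have hav : G.dvert a ≠ v := ha.trans_ne hα.dvert_dinv_link
        exact ⟨⟨a, hav, hα.dvert_dinv_ne hav hae⟩, ha,
          hσa ▸ sameCycle_apply_left.2 SameCycle.rfl⟩
      · exact ⟨⟨x, hx, hα.dvert_dinv_ne hx hxe⟩, rfl, SameCycle.rfl⟩
    obtain ⟨y, hy, hdy⟩ := hrep d hd
    obtain ⟨y', hy', hdy'⟩ := hrep d' (h ▸ hd)
    have hyy' := hskip.sameCycle_val (ρ'.sameCycle_s6 (Subtype.ext (hy.trans (h.trans hy'.symm))))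
    exact hdy.trans (hyy'.trans hdy'.symm)

open Equiv Equiv.Perm in
lemma exists_perm_isSkip (hα : G.IsAlphaVertex v l e) {a : G.D}
    (ha : G.dvert a = G.dvert (G.dinv e)) (hae : a ≠ G.dinv e)
    (ρ' : (G.deleteVertex v).RotationSystem) :
    ∃ σ : Perm G.D, σ.IsSkip (G.dinv e) ρ'.σ ∧ (∀ x, G.dvert (σ x) = G.dvert x) ∧
      σ a = G.dinv e ∧ σ l = G.dinv l ∧ σ (G.dinv l) = e := by
  have hav : G.dvert a ≠ v := ha.trans_ne hα.dvert_dinv_link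
  have hPe : ¬(G.dvert (G.dinv e) ≠ v ∧ G.dvert (G.dinv (G.dinv e)) ≠ v) :=
    (hα.not_mem_deleteVertex_iff _).2 (by simp)
  have hl := hα.dvert_loop
  have hl' := hα.dvert_dinv_loop
  have he := hα.dvert_link
  -- the rotation `l ↦ dinv l ↦ e ↦ l` at `v`
  let π : Perm G.D := swap l e * swap l (G.dinv l)
  have hπ : ∀ x, G.dvert x ≠ v → π x = x := fun x hx => by
    have : x ≠ l ∧ x ≠ G.dinv l ∧ x ≠ e := ⟨ne_of_apply_ne G.dvert (hl ▸ hx),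
      ne_of_apply_ne G.dvert (hl' ▸ hx), ne_of_apply_ne G.dvert (he ▸ hx)⟩
    simp only [π, mul_apply, swap_apply_of_ne_of_ne this.1 this.2.1,
      swap_apply_of_ne_of_ne this.1 this.2.2]
  have hπvert : ∀ x, G.dvert (π x) = G.dvert x := fun x =>
    (dvert_swap_apply (hl.trans he.symm) _).trans (dvert_swap_apply (hl.trans hl'.symm) _)
  let σ : Perm G.D := ofSubtype ρ'.σ * swap a (G.dinv e) * π
  have hσv : ∀ x, G.dvert x = v → σ x = π x := by
    intro x hx
    have hπx : G.dvert (π x) = v := (hπvert x).trans hx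
    show ofSubtype ρ'.σ (swap a (G.dinv e) (π x)) = π x
    rw [swap_apply_of_ne_of_ne (ne_of_apply_ne G.dvert (hπx.trans_ne hav.symm))
      (hα.ne_dinv_link hπx)]
    exact ofSubtype_apply_of_not_mem ρ'.σ fun h => h.1 hπx
  refine ⟨σ, isSkip_ofSubtype_mul_swap_mul ρ'.σ ⟨hav, hα.dvert_dinv_ne hav hae⟩ hPe
    fun x hx => hπ x (hx.elim And.left fun h => h ▸ hα.dvert_dinv_link), fun x =>
    (ρ'.dvert_ofSubtype_apply _).trans <| (dvert_swap_apply ha _).trans (hπvert x), ?_, ?_, ?_⟩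
  · show ofSubtype ρ'.σ (swap a (G.dinv e) (π a)) = _
    rw [hπ a hav, swap_apply_left]
    exact ofSubtype_apply_of_not_mem ρ'.σ hPe
  · rw [hσv l hl]
    simp [π, swap_apply_of_ne_of_ne (G.dinv_ne l) hα.dinv_loop_ne_link]
  · rw [hσv _ hl']
    simp [π]

lemma exists_rotationSystem_isSkip (hα : G.IsAlphaVertex v l e) {a : G.D}
    (ha : G.dvert a = G.dvert (G.dinv e)) (hae : a ≠ G.dinv e)
    (ρ' : (G.deleteVertex v).RotationSystem) :
    ∃ ρ : G.RotationSystem,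
      ρ.σ.IsSkip (G.dinv e) ρ'.σ ∧ ρ.σ (G.dinv e) ≠ G.dinv e := by
  obtain ⟨σ, hskip, hvert, hσa, hσl, hσl'⟩ := hα.exists_perm_isSkip ha hae ρ'
  have hav : G.dvert a ≠ v := ha.trans_ne hα.dvert_dinv_link
  have hPa : G.dvert a ≠ v ∧ G.dvert (G.dinv a) ≠ v := ⟨hav, hα.dvert_dinv_ne hav hae⟩
  have hfix : σ (G.dinv e) ≠ G.dinv e := by
    have h := hskip ⟨a, hPa⟩
    rw [if_pos hσa] at h
    have hPe : ¬(G.dvert (G.dinv e) ≠ v ∧ G.dvert (G.dinv (G.dinv e)) ≠ v) :=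
      (hα.not_mem_deleteVertex_iff _).2 (by simp)
    exact h ▸ fun h' => hPe (h' ▸ (ρ'.σ ⟨a, hPa⟩).2)
  refine ⟨⟨σ, hvert, fun d d' h => ?_⟩, hskip, hfix⟩
  exact (hα.sameCycle_of_isSkip ha hae ρ' hskip hσa hσl hσl' h).exists_nat_pow_eq

lemma embGenus_eq_deleteVertex (hα : G.IsAlphaVertex v l e) {ρ : G.RotationSystem}
    {ρ' : (G.deleteVertex v).RotationSystem} (hskip : ρ.σ.IsSkip (G.dinv e) ρ'.σ)
    (hfix : ρ.σ (G.dinv e) ≠ G.dinv e) : G.embGenus ρ = (G.deleteVertex v).embGenus ρ' :=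
  embGenus_eq_of_card_eq ρ ρ' hα.card_D_eq_deleteVertex_add_four
    (card_V_eq_deleteVertex_add_one v) (hα.faceCount_eq_deleteVertex_add_one hskip hfix)

lemma maxGenus_deleteVertex_eq_of_ne (hα : G.IsAlphaVertex v l e) {a : G.D}
    (ha : G.dvert a = G.dvert (G.dinv e)) (hae : a ≠ G.dinv e) :
    (G.deleteVertex v).maxGenus = G.maxGenus := by
  refine congrArg sSup (Set.ext fun k => ⟨?_, ?_⟩)
  · rintro ⟨ρ', rfl⟩
    obtain ⟨ρ, hskip, hfix⟩ := hα.exists_rotationSystem_isSkip ha hae ρ'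
    exact ⟨ρ, hα.embGenus_eq_deleteVertex hskip hfix⟩
  · rintro ⟨ρ, rfl⟩
    have hfix : ρ.σ (G.dinv e) ≠ G.dinv e := fun h => hae ((ρ.sameCycle_s6 ha).eq_of_right h)
    obtain ⟨ρ', hskip⟩ := hα.exists_rotationSystem_deleteVertex_isSkip ρ hfix
    exact ⟨ρ', (hα.embGenus_eq_deleteVertex hskip hfix).symm⟩

lemma isEmpty_deleteVertex_D (hα : G.IsAlphaVertex v l e) (hG : G.Connected)
    (hw : ∀ a, G.dvert a = G.dvert (G.dinv e) → a = G.dinv e) :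
    IsEmpty (G.deleteVertex v).D := by
  have hS : ∀ d, G.dvert d = v ∨ G.dvert d = G.dvert (G.dinv e) →
      G.dvert (G.dinv d) = v ∨ G.dvert (G.dinv d) = G.dvert (G.dinv e) := by
    rintro d (hd | hd)
    · rcases hα.eq_of_dvert d hd with rfl | rfl | rfl
      · exact Or.inl hα.dvert_dinv_loop
      · exact Or.inl (by rw [G.dinv_invol]; exact hα.dvert_loop)
      · exact Or.inr rfl
    · rw [hw d hd, G.dinv_invol]
      exact Or.inl hα.dvert_link
  refine ⟨fun x => ?_⟩
  rcases hG.mem_of_closed (S := {u | u = v ∨ u = G.dvert (G.dinv e)}) (Or.inl rfl) hS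
    (G.dvert x.1) with h | h
  · exact x.2.1 h
  · exact x.2.2 (by rw [hw _ h, G.dinv_invol]; exact hα.dvert_link)

lemma maxGenus_deleteVertex_eq_of_isEmpty (hα : G.IsAlphaVertex v l e)
    [IsEmpty (G.deleteVertex v).D] : (G.deleteVertex v).maxGenus = G.maxGenus := by
  have hD : Fintype.card (G.deleteVertex v).D = 0 := Fintype.card_eq_zero
  have hV : 0 < Fintype.card (G.deleteVertex v).V :=
    Fintype.card_pos_iff.2 ⟨⟨_, hα.dvert_dinv_link⟩⟩
  have : Nonempty G.D := ⟨e⟩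
  refine (maxGenus_eq_zero fun ρ' => embGenus_eq_zero_of_le ρ' ?_).trans
    (maxGenus_eq_zero fun ρ => embGenus_eq_zero_of_le ρ ?_).symm
  · unfold edgeCount vertexCount
    omega
  · have := faceCount_pos ρ
    unfold edgeCount vertexCount
    rw [hα.card_D_eq_deleteVertex_add_four, card_V_eq_deleteVertex_add_one v]
    omega

end IsAlphaVertex

end Multigraph

/-- If `v` is an `α`-vertex of a connected graph `G` — i.e. `v` is incident with a loop
(the darts `d₁`, `dinv d₁`) and with exactly one other, non-loop, edge (the dart `d₃`) —
then `γ_M(G - v) = γ_M(G)`. -/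
theorem maxGenus_deleteVertex_alpha (G : Multigraph) (hG : G.Connected) (v : G.V)
    (d₁ d₃ : G.D)
    (hloop₁ : G.dvert d₁ = v) (hloop₂ : G.dvert (G.dinv d₁) = v)
    (hd₃ : G.dvert d₃ = v) (hd₃' : G.dvert (G.dinv d₃) ≠ v)
    (hall : ∀ d, G.dvert d = v → d = d₁ ∨ d = G.dinv d₁ ∨ d = d₃) :
    (G.deleteVertex v).maxGenus = G.maxGenus := by
  have hα : G.IsAlphaVertex v d₁ d₃ := ⟨hloop₁, hloop₂, hd₃, hd₃', hall⟩
  by_cases hw : ∀ a, G.dvert a = G.dvert (G.dinv d₃) → a = G.dinv d₃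
  · have := hα.isEmpty_deleteVertex_D hG hw
    exact hα.maxGenus_deleteVertex_eq_of_isEmpty
  · simp only [not_forall] at hw
    obtain ⟨a, ha, hae⟩ := hw
    exact hα.maxGenus_deleteVertex_eq_of_ne ha hae
end
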